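/- Let h : ℝ → ℝ be C^1 with δ_h ≤ h'(r) ≤ C_h for all r (δ_h, C_h > 0), and let ĥ(r) := ∫_0^r h^{-1}(ξ) dξ be the primitive of the inverse function h^{-1}. Then for every r ∈ ℝ, ĥ(h(r)) ≥ (1/(4 C_h)) |h(r)|^2 − C_h |h^{-1}(0)|^2. -/

import Mathlib

/-!
Write `a = h⁻¹(0)`. Since `h' ≤ C_h`, the inverse grows at least with slope `1 / C_h`, so
`h⁻¹(ξ) - (a + ξ / C_h)` has the sign of `ξ`. Integrating from `0` to `s = h(r)` gives
`ĥ(s) ≥ a s + s² / (2 C_h)`, and completing the square,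
`a s + s² / (2 C_h) ≥ s² / (4 C_h) - C_h a²`.
-/

open intervalIntegral

theorem integral_zero_nonneg_of_sign {f : ℝ → ℝ} (hpos : ∀ x, 0 ≤ x → 0 ≤ f x)
    (hneg : ∀ x, x ≤ 0 → f x ≤ 0) (s : ℝ) : 0 ≤ ∫ x in (0 : ℝ)..s, f x := by
  rcases le_total 0 s with hs | hs
  · exact integral_nonneg hs fun x hx => hpos x hx.1
  · rw [integral_symm, ← integral_neg]
    exact integral_nonneg hs fun x hx => neg_nonneg.2 (hneg x hx.2)

theorem integral_zero_add_div (a C s : ℝ) :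
    ∫ x in (0 : ℝ)..s, (a + x / C) = a * s + s ^ 2 / (2 * C) := by
  rw [integral_add (g := fun x => x / C) intervalIntegrable_const
    ((continuous_id.div_const C).intervalIntegrable _ _), integral_div, integral_id,
    integral_const]
  simp only [sub_zero, smul_eq_mul]
  ring

theorem sq_div_four_mul_sub_le {C : ℝ} (hC : 0 < C) (a s : ℝ) :
    s ^ 2 / (4 * C) - C * a ^ 2 ≤ a * s + s ^ 2 / (2 * C) := by
  have hsq : 0 ≤ (s + 2 * C * a) ^ 2 / (4 * C) := by positivity
  have hid : a * s + s ^ 2 / (2 * C) - (s ^ 2 / (4 * C) - C * a ^ 2) =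
      (s + 2 * C * a) ^ 2 / (4 * C) := by
    field_simp
    ring
  linarith

section RightInverse

variable {h g : ℝ → ℝ} {C : ℝ}

theorem add_div_le_of_rightInverse (hC : 0 < C) (hh : StrictMono h)
    (hg : Function.RightInverse g h) (hlip : ∀ ⦃a b⦄, a ≤ b → h b - h a ≤ C * (b - a))
    {x y : ℝ} (hxy : x ≤ y) : g x + (y - x) / C ≤ g y := by
  have hstep : 0 ≤ (y - x) / C := div_nonneg (sub_nonneg.2 hxy) hC.le
  have hincr := @hlip (g x) _ (le_add_of_nonneg_right hstep)
  rw [hg x, add_sub_cancel_left, mul_div_cancel₀ _ hC.ne'] at hincr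
  rw [← hh.le_iff_le, hg y]
  linarith

theorem mul_add_sq_div_le_integral_rightInverse (hC : 0 < C) (hh : StrictMono h)
    (hg : Function.RightInverse g h) (hlip : ∀ ⦃a b⦄, a ≤ b → h b - h a ≤ C * (b - a))
    (s : ℝ) : g 0 * s + s ^ 2 / (2 * C) ≤ ∫ x in (0 : ℝ)..s, g x := by
  have hg_mono : Monotone g := fun x y hxy => by
    rwa [← hh.le_iff_le, hg x, hg y]
  have hgap : 0 ≤ ∫ x in (0 : ℝ)..s, (g x - (g 0 + x / C)) := by
    refine integral_zero_nonneg_of_sign (fun x hx => ?_) (fun x hx => ?_) s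
    · have := add_div_le_of_rightInverse hC hh hg hlip hx
      rw [sub_zero] at this
      linarith
    · have := add_div_le_of_rightInverse hC hh hg hlip hx
      rw [zero_sub, neg_div] at this
      linarith
  rw [integral_sub (g := fun x => g 0 + x / C) hg_mono.intervalIntegrable
    ((continuous_const.add (continuous_id.div_const C)).intervalIntegrable _ _),
    integral_zero_add_div] at hgap
  linarith

end RightInverse

theorem stmt_2_general (h h' hinv : ℝ → ℝ) (δh Ch : ℝ) (hδh : 0 < δh) (hCh : 0 < Ch)
    (hderiv : ∀ r, HasDerivAt h (h' r) r)
    (hbound : ∀ r, δh ≤ h' r ∧ h' r ≤ Ch)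
    (hinv_right : Function.RightInverse hinv h) :
    ∀ r : ℝ,
      (1 / (4 * Ch)) * |h r| ^ 2 - Ch * |hinv 0| ^ 2 ≤ ∫ ξ in (0:ℝ)..(h r), hinv ξ := by
  intro r
  have hmono : StrictMono h :=
    strictMono_of_hasDerivAt_pos hderiv fun x => hδh.trans_le (hbound x).1
  have hlip : ∀ ⦃a b⦄, a ≤ b → h b - h a ≤ Ch * (b - a) :=
    image_sub_le_mul_sub_of_deriv_le (fun x => (hderiv x).differentiableAt)
      fun x => (hderiv x).deriv ▸ (hbound x).2
  rw [sq_abs, sq_abs, one_div_mul_eq_div]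
  linarith [sq_div_four_mul_sub_le hCh (hinv 0) (h r),
    mul_add_sq_div_le_integral_rightInverse hCh hmono hinv_right hlip (h r)]

/-- If h ∈ C¹(ℝ) with δ_h ≤ h' ≤ C_h, and ĥ(r) := ∫₀^r h⁻¹(ξ)dξ is the primitive of the
inverse function h⁻¹, then `ĥ(h(r)) ≥ (1/(4C_h))|h(r)|² − C_h |h⁻¹(0)|²` for every r. -/
theorem stmt_2 (h h' hinv : ℝ → ℝ) (δh Ch : ℝ) (hδh : 0 < δh) (hCh : 0 < Ch)
    (hderiv : ∀ r, HasDerivAt h (h' r) r) (hcont : Continuous h')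
    (hbound : ∀ r, δh ≤ h' r ∧ h' r ≤ Ch)
    (hinv_left : Function.LeftInverse hinv h)
    (hinv_right : Function.RightInverse hinv h) :
    ∀ r : ℝ,
      (1 / (4 * Ch)) * |h r| ^ 2 - Ch * |hinv 0| ^ 2 ≤ ∫ ξ in (0:ℝ)..(h r), hinv ξ :=
  stmt_2_general h h' hinv δh Ch hδh hCh hderiv hbound hinv_right
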